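/- arXiv:1807.03815 — 2 statements merged into one kernel-verified Lean document; each statement's English description precedes it below -/
import Mathlib

section
/- Let G be a locally compact abelian group and μ a norm almost periodic translation bounded measure on G. Then each of the components μ_pp, μ_ac, μ_sc of the Lebesgue decomposition of μ (with respect to Haar measure) is norm almost periodic. Moreover, for each ε > 0, the set of ε-norm almost periods of μ is simultaneously a set of ε-norm almost periods for μ_pp, μ_ac and μ_sc. -/
open MeasureTheory

/-- The `K`-norm distance between two (positive) translation bounded measures:
`sup_{s ∈ G} sup { |μ(A) - ν(A)| : A measurable, A ⊆ s + K }`, a variant of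
`‖μ - ν‖_K`. -/
noncomputable def normDist {G : Type*} [AddCommGroup G] [MeasurableSpace G]
    (μ ν : Measure G) (K : Set G) : ℝ :=
  ⨆ s : G, ⨆ A : {A : Set G // MeasurableSet A ∧ A ⊆ (s + ·) '' K},
    |(μ A.1).toReal - (ν A.1).toReal|

/-! Each Lebesgue component `ν` of `μ`, together with its translate `T_t ν`, lives on a measurable
set `W` that carries no mass of the other two components or of their translates: the three classes
are translation invariant and pairwise mutually singular. Hence `ν = μ|_W` and
`T_t ν = (T_t μ)|_W`, and restricting to `W` can only decrease the `K`-norm distance, so every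
`ε`-norm almost period of `μ` is one of `ν`. -/

open Measure Set
open scoped ENNReal

theorem MeasureTheory.Measure.restrict_add_compl_eq_of_null {α : Type*} [MeasurableSpace α]
    {ν ρ : Measure α} {N : Set α} (hν : ν N = 0) (hρ : ρ Nᶜ = 0) :
    (ν + ρ).restrict Nᶜ = ν := by
  rw [restrict_add, restrict_eq_zero.2 hρ, add_zero]
  exact restrict_eq_self_of_ae_mem (compl_mem_ae_iff.2 hν)

def IsPurePoint {α : Type*} [MeasurableSpace α] (ν : Measure α) : Prop :=
  ∃ D : Set α, D.Countable ∧ ν Dᶜ = 0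

namespace IsPurePoint

variable {α : Type*} [MeasurableSpace α] {ν ν' : Measure α}

theorem add (h : IsPurePoint ν) (h' : IsPurePoint ν') : IsPurePoint (ν + ν') := by
  obtain ⟨D, hD, hDν⟩ := h
  obtain ⟨D', hD', hD'ν'⟩ := h'
  refine ⟨D ∪ D', hD.union hD', ?_⟩
  rw [add_apply, measure_mono_null (compl_subset_compl.2 subset_union_left) hDν,
    measure_mono_null (compl_subset_compl.2 subset_union_right) hD'ν', add_zero]

theorem map {β : Type*} [MeasurableSpace β] {f : α → β} (hf : MeasurableEmbedding f)
    (h : IsPurePoint ν) : IsPurePoint (ν.map f) := by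
  obtain ⟨D, hD, hDν⟩ := h
  refine ⟨f '' D, hD.image f, ?_⟩
  rw [hf.map_apply, preimage_compl, hf.injective.preimage_image, hDν]

theorem mutuallySingular (h : IsPurePoint ν) (ρ : Measure α) [NullSingletonClass ρ] :
    ν ⟂ₘ ρ := by
  obtain ⟨D, hD, hDν⟩ := h
  obtain ⟨T, hDT, hT, hTν⟩ := exists_measurable_superset_of_null hDν
  exact ⟨T, hT, hTν, measure_mono_null (compl_subset_comm.1 hDT) (hD.measure_zero ρ)⟩

end IsPurePoint

instance MeasureTheory.Measure.instNullSingletonClassAdd {α : Type*} [MeasurableSpace α]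
    (μ ν : Measure α) [NullSingletonClass μ] [NullSingletonClass ν] :
    NullSingletonClass (μ + ν) :=
  ⟨fun x => by simp⟩

theorem MeasurableEmbedding.nullSingletonClass_map {α β : Type*} [MeasurableSpace α]
    [MeasurableSpace β] {f : α → β} (hf : MeasurableEmbedding f) (μ : Measure α)
    [NullSingletonClass μ] : NullSingletonClass (μ.map f) :=
  ⟨fun y => by
    rw [hf.map_apply]
    exact (subsingleton_singleton.preimage hf.injective).measure_zero μ⟩

section AddLeft

variable {G : Type*} [AddGroup G] [MeasurableSpace G] [MeasurableAdd G]

instance MeasureTheory.Measure.instNullSingletonClassMapAddLeft (μ : Measure G)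
    [NullSingletonClass μ] (g : G) : NullSingletonClass (μ.map (g + ·)) :=
  (measurableEmbedding_addLeft g).nullSingletonClass_map μ

variable {ν haar : Measure G} [haar.IsAddLeftInvariant]

theorem MeasureTheory.Measure.AbsolutelyContinuous.map_add_left (h : ν ≪ haar) (t : G) :
    ν.map (t + ·) ≪ haar := by
  simpa only [map_add_left_eq_self] using h.map (measurable_const_add t)

theorem MeasureTheory.Measure.MutuallySingular.map_add_left (h : ν ⟂ₘ haar) (t : G) :
    ν.map (t + ·) ⟂ₘ haar := by
  simpa only [map_add_left_eq_self] using
    (measurableEmbedding_addLeft t).mutuallySingular_map h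

end AddLeft

section NormDist

variable {G : Type*} [AddCommGroup G] [MeasurableSpace G] {μ ν : Measure G} {K : Set G}

theorem normDist_nonneg : 0 ≤ normDist μ ν K :=
  Real.iSup_nonneg fun _ => Real.iSup_nonneg fun _ => abs_nonneg _

theorem abs_sub_le_normDist {M : ℝ≥0∞} (hM : M ≠ ∞) (hμ : ∀ s, μ ((s + ·) '' K) ≤ M)
    (hν : ∀ s, ν ((s + ·) '' K) ≤ M) {s : G} {A : Set G} (hA : MeasurableSet A)
    (hAK : A ⊆ (s + ·) '' K) :
    |(μ A).toReal - (ν A).toReal| ≤ normDist μ ν K := by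
  have bound : ∀ u (B : Set G), B ⊆ (u + ·) '' K →
      |(μ B).toReal - (ν B).toReal| ≤ M.toReal :=
    fun u B hB => abs_sub_le_of_nonneg_of_le ENNReal.toReal_nonneg
      (ENNReal.toReal_mono hM ((measure_mono hB).trans (hμ u))) ENNReal.toReal_nonneg
      (ENNReal.toReal_mono hM ((measure_mono hB).trans (hν u)))
  unfold normDist
  refine le_ciSup_of_le ⟨M.toReal, ?_⟩ s (le_ciSup_of_le ⟨M.toReal, ?_⟩ ⟨A, hA, hAK⟩ le_rfl)
  · rintro _ ⟨u, rfl⟩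
    exact Real.iSup_le (fun B => bound u B.1 B.2.2) ENNReal.toReal_nonneg
  · rintro _ ⟨B, rfl⟩
    exact bound s B.1 B.2.2

theorem normDist_restrict_le {M : ℝ≥0∞} (hM : M ≠ ∞) (hμ : ∀ s, μ ((s + ·) '' K) ≤ M)
    (hν : ∀ s, ν ((s + ·) '' K) ≤ M) {W : Set G} (hW : MeasurableSet W) :
    normDist (μ.restrict W) (ν.restrict W) K ≤ normDist μ ν K :=
  Real.iSup_le (fun _ => Real.iSup_le (fun A => by
    rw [restrict_apply A.2.1, restrict_apply A.2.1]
    exact abs_sub_le_normDist hM hμ hν (A.2.1.inter hW) (inter_subset_left.trans A.2.2))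
    normDist_nonneg) normDist_nonneg

theorem map_add_left_apply_image_add_left [MeasurableAdd G] (μ : Measure G) (t s : G) :
    μ.map (t + ·) ((s + ·) '' K) = μ ((-t + s + ·) '' K) := by
  rw [(measurableEmbedding_addLeft t).map_apply, image_add_left, image_add_left,
    preimage_preimage]
  simp only [neg_add_rev, neg_neg, add_assoc]

theorem normDist_map_le_of_mutuallySingular [MeasurableAdd G] {ρ : Measure G}
    (hμ : μ = ν + ρ) (hK : (⨆ s : G, μ ((s + ·) '' K)) < ∞) (t : G)
    (h : ν + ν.map (t + ·) ⟂ₘ ρ + ρ.map (t + ·)) :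
    normDist (ν.map (t + ·)) ν K ≤ normDist (μ.map (t + ·)) μ K := by
  have hνN := add_eq_zero.1 h.measure_nullSet
  have hρN := add_eq_zero.1 h.measure_compl_nullSet
  have hbound : ∀ s, μ ((s + ·) '' K) ≤ ⨆ s : G, μ ((s + ·) '' K) :=
    le_iSup fun s => μ ((s + ·) '' K)
  calc normDist (ν.map (t + ·)) ν K
      = normDist ((μ.map (t + ·)).restrict h.nullSetᶜ) (μ.restrict h.nullSetᶜ) K := by
        rw [hμ, Measure.map_add _ _ (measurable_const_add t),
          restrict_add_compl_eq_of_null hνN.2 hρN.2, restrict_add_compl_eq_of_null hνN.1 hρN.1]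
    _ ≤ normDist (μ.map (t + ·)) μ K :=
        normDist_restrict_le hK.ne
          (fun s => by rw [map_add_left_apply_image_add_left]; exact hbound _) hbound
          h.measurableSet_nullSet.compl

end NormDist

theorem normDist_map_le_of_lebesgueDecomposition {G : Type*} [AddCommGroup G]
    [MeasurableSpace G] [MeasurableAdd G] {haar : Measure G} [haar.IsAddLeftInvariant]
    {μ μpp μac μsc : Measure G} {K : Set G} (hdec : μ = μpp + μac + μsc)
    (hpp : IsPurePoint μpp) (hac : μac ≪ haar) [NullSingletonClass μac]
    (hsc : μsc ⟂ₘ haar) [NullSingletonClass μsc] (hK : (⨆ s : G, μ ((s + ·) '' K)) < ∞) (t : G) :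
    ∀ ν ∈ ({μpp, μac, μsc} : Set (Measure G)),
      normDist (ν.map (t + ·)) ν K ≤ normDist (μ.map (t + ·)) μ K := by
  have pp : IsPurePoint (μpp + μpp.map (t + ·)) :=
    hpp.add (hpp.map (measurableEmbedding_addLeft t))
  have ac : μac + μac.map (t + ·) ≪ haar := hac.add_left (hac.map_add_left t)
  have ac_sc : μac + μac.map (t + ·) ⟂ₘ μsc + μsc.map (t + ·) :=
    ((hsc.add_left (hsc.map_add_left t)).mono_ac .rfl ac).symm
  intro ν hν
  simp only [mem_insert_iff, mem_singleton_iff] at hν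
  rcases hν with h | h | h <;> subst ν
  · exact normDist_map_le_of_mutuallySingular (hdec.trans (add_assoc _ _ _)) hK t
      (pp.mutuallySingular _)
  · refine normDist_map_le_of_mutuallySingular (ρ := μpp + μsc) (by rw [hdec]; abel) hK t ?_
    rw [Measure.map_add _ _ (measurable_const_add t), add_add_add_comm]
    exact (pp.mutuallySingular _).symm.add_right ac_sc
  · refine normDist_map_le_of_mutuallySingular (ρ := μpp + μac) (by rw [hdec]; abel) hK t ?_
    rw [Measure.map_add _ _ (measurable_const_add t), add_add_add_comm]
    exact (pp.mutuallySingular _).symm.add_right ac_sc.symm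

theorem stmt_5_general {G : Type*} [TopologicalSpace G] [AddCommGroup G] [IsTopologicalAddGroup G]
    [MeasurableSpace G] [BorelSpace G]
    (haar : Measure G) [haar.IsAddHaarMeasure]
    (K : Set G) (hK : IsCompact K)
    (μ μpp μac μsc : Measure G)
    (hμtb : ∀ C : Set G, IsCompact C → (⨆ t : G, μ ((t + ·) '' C)) < ⊤)
    (hdec : μ = μpp + μac + μsc)
    (hpp : ∃ D : Set G, D.Countable ∧ μpp Dᶜ = 0)
    (hac : μac ≪ haar) (hac' : ∀ x : G, μac {x} = 0)
    (hsc : μsc ⟂ₘ haar) (hsc' : ∀ x : G, μsc {x} = 0)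
    (hμap : ∀ ε > (0 : ℝ), ∃ C : Set G, IsCompact C ∧
      ∀ g : G, ∃ t : G, normDist (μ.map (t + ·)) μ K < ε ∧ g ∈ (t + ·) '' C) :
    (∀ ν ∈ ({μpp, μac, μsc} : Set (Measure G)),
      ∀ ε > (0 : ℝ), ∃ C : Set G, IsCompact C ∧
        ∀ g : G, ∃ t : G, normDist (ν.map (t + ·)) ν K < ε ∧ g ∈ (t + ·) '' C) ∧
    (∀ ε > (0 : ℝ), ∀ t : G, normDist (μ.map (t + ·)) μ K < ε →
      ∀ ν ∈ ({μpp, μac, μsc} : Set (Measure G)),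
        normDist (ν.map (t + ·)) ν K < ε) := by
  have : NullSingletonClass μac := ⟨hac'⟩
  have : NullSingletonClass μsc := ⟨hsc'⟩
  have key := normDist_map_le_of_lebesgueDecomposition hdec hpp hac hsc (hμtb K hK)
  refine ⟨fun ν hν ε hε => ?_, fun ε _ t ht ν hν => (key t ν hν).trans_lt ht⟩
  obtain ⟨C, hC, hrel⟩ := hμap ε hε
  refine ⟨C, hC, fun g => ?_⟩
  obtain ⟨t, ht, hg⟩ := hrel g
  exact ⟨t, (key t ν hν).trans_lt ht, hg⟩

/-- If `μ` is a norm almost periodic translation bounded measure on a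
locally compact abelian group `G` with Lebesgue decomposition `μ = μpp + μac + μsc`
(w.r.t. Haar measure), then each of `μpp, μac, μsc` is norm almost periodic; moreover
every `ε`-norm almost period of `μ` is an `ε`-norm almost period of each of
`μpp`, `μac` and `μsc`. -/
theorem stmt_5 {G : Type*} [TopologicalSpace G] [AddCommGroup G] [IsTopologicalAddGroup G]
    [LocallyCompactSpace G] [T2Space G] [MeasurableSpace G] [BorelSpace G]
    (haar : Measure G) [haar.IsAddHaarMeasure]
    (K : Set G) (hK : IsCompact K) (hKint : (interior K).Nonempty)
    (μ μpp μac μsc : Measure G)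
    (hμtb : ∀ C : Set G, IsCompact C → (⨆ t : G, μ ((t + ·) '' C)) < ⊤)
    (hdec : μ = μpp + μac + μsc)
    (hpp : ∃ D : Set G, D.Countable ∧ μpp Dᶜ = 0)
    (hac : μac ≪ haar) (hac' : ∀ x : G, μac {x} = 0)
    (hsc : μsc ⟂ₘ haar) (hsc' : ∀ x : G, μsc {x} = 0)
    (hμap : ∀ ε > (0 : ℝ), ∃ C : Set G, IsCompact C ∧
      ∀ g : G, ∃ t : G, normDist (μ.map (t + ·)) μ K < ε ∧ g ∈ (t + ·) '' C) :
    (∀ ν ∈ ({μpp, μac, μsc} : Set (Measure G)),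
      ∀ ε > (0 : ℝ), ∃ C : Set G, IsCompact C ∧
        ∀ g : G, ∃ t : G, normDist (ν.map (t + ·)) ν K < ε ∧ g ∈ (t + ·) '' C) ∧
    (∀ ε > (0 : ℝ), ∀ t : G, normDist (μ.map (t + ·)) μ K < ε →
      ∀ ν ∈ ({μpp, μac, μsc} : Set (Measure G)),
        normDist (ν.map (t + ·)) ν K < ε) :=
  stmt_5_general haar K hK μ μpp μac μsc hμtb hdec hpp hac hac' hsc hsc' hμap
end

section
/- Let ω be a pure point measure on a σ-compact locally compact abelian group G (so ω has countable support) and let ν be a finite measure on G with Lebesgue decomposition ν = ν_pp + ν_ac + ν_sc with respect to Haar measure. If ω is translation bounded, then ω * ν_pp is a pure point measure, ω * ν_ac is absolutely continuous with respect to Haar measure, and ω * ν_sc is a continuous (atomless) measure singular to Haar measure. -/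
open MeasureTheory Measure Set
open scoped Pointwise

namespace MeasureTheory.Measure

variable {G : Type*} [AddGroup G] [MeasurableSpace G] [MeasurableAdd₂ G] {μ ν : Measure G}

theorem conv_apply [SFinite ν] {s : Set G} (hs : MeasurableSet s) :
    (μ ∗ ν) s = ∫⁻ x, ν ((x + ·) ⁻¹' s) ∂μ := by
  rw [conv, map_apply measurable_add hs, prod_apply (measurable_add hs)]
  rfl

theorem conv_apply_eq_zero [SFinite ν] {s : Set G} (hs : MeasurableSet s)
    (h : ∀ᵐ x ∂μ, ν ((x + ·) ⁻¹' s) = 0) : (μ ∗ ν) s = 0 := by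
  rw [conv_apply hs, lintegral_congr_ae h, lintegral_zero]

theorem conv_singleton_eq_zero [SFinite ν] [MeasurableSingletonClass G]
    (hν : ∀ y, ν {y} = 0) (x : G) : (μ ∗ ν) {x} = 0 :=
  conv_apply_eq_zero (measurableSet_singleton x) <| ae_of_all _ fun t => by
    rw [preimage_add_left_singleton]
    exact hν _

theorem conv_compl_add_eq_zero [SFinite ν] [MeasurableSingletonClass G] {D E : Set G}
    (hD : D.Countable) (hE : E.Countable) (hμ : μ Dᶜ = 0) (hν : ν Eᶜ = 0) :
    (μ ∗ ν) (D + E)ᶜ = 0 := by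
  refine conv_apply_eq_zero (hD.image2 hE _).measurableSet.compl ?_
  filter_upwards [mem_ae_iff.2 hμ] with x hx
  exact measure_mono_null (fun y hy hyE => hy (add_mem_add hx hyE)) hν

/-- `μ ∗ ν` is carried by the intersection, over the countably many atoms `t` of `μ`, of the
translates `t + u` of a `ρ`-conull set `u` that `ν` does not charge. -/
theorem conv_mutuallySingular [SFinite ν] {ρ : Measure G} [IsAddLeftInvariant ρ] {D : Set G}
    (hD : D.Countable) (hμ : μ Dᶜ = 0) (hν : ν ⟂ₘ ρ) : μ ∗ ν ⟂ₘ ρ := by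
  obtain ⟨u, hu, hνu, hρu⟩ := hν
  have hT : MeasurableSet (⋂ t ∈ D, (-t + ·) ⁻¹' u) :=
    .biInter hD fun t _ => measurable_const_add (-t) hu
  refine ⟨_, hT, conv_apply_eq_zero hT ?_, ?_⟩
  · filter_upwards [mem_ae_iff.2 hμ] with x hx
    refine measure_mono_null (fun y hy => ?_) hνu
    simpa using mem_iInter₂.1 hy x hx
  · rw [compl_iInter₂, measure_biUnion_null_iff hD]
    intro t _
    rw [← preimage_compl, measure_preimage_add]
    exact hρu

end MeasureTheory.Measure

theorem stmt_9_general {G : Type*} [TopologicalSpace G] [AddCommGroup G] [IsTopologicalAddGroup G]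
    [T2Space G] [SecondCountableTopology G]
    [MeasurableSpace G] [BorelSpace G]
    (haar : Measure G) [haar.IsAddHaarMeasure]
    (ω νpp νac νsc : Measure G)
    [IsFiniteMeasure νpp] [IsFiniteMeasure νac] [IsFiniteMeasure νsc]
    (hωpp : ∃ D : Set G, D.Countable ∧ ω Dᶜ = 0)
    (hpp : ∃ D : Set G, D.Countable ∧ νpp Dᶜ = 0)
    (hac : νac ≪ haar)
    (hsc : νsc ⟂ₘ haar) (hsc' : ∀ x : G, νsc {x} = 0) :
    (∃ D : Set G, D.Countable ∧ ((ω.prod νpp).map (fun p : G × G => p.1 + p.2)) Dᶜ = 0) ∧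
    ((ω.prod νac).map (fun p : G × G => p.1 + p.2)) ≪ haar ∧
    (∀ x : G, ((ω.prod νsc).map (fun p : G × G => p.1 + p.2)) {x} = 0) ∧
    ((ω.prod νsc).map (fun p : G × G => p.1 + p.2)) ⟂ₘ haar := by
  obtain ⟨D, hD, hωD⟩ := hωpp
  obtain ⟨E, hE, hνE⟩ := hpp
  exact ⟨⟨D + E, hD.image2 hE _, conv_compl_add_eq_zero hD hE hωD hνE⟩,
    conv_absolutelyContinuous hac, conv_singleton_eq_zero hsc',
    conv_mutuallySingular hD hωD hsc⟩

/-- Let `ω` be a translation bounded pure point measure on a σ-compact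
locally compact abelian group `G`, and let `ν` be a finite measure with Lebesgue
decomposition `ν = νpp + νac + νsc` with respect to Haar measure.  Then `ω * νpp` is
pure point, `ω * νac` is absolutely continuous w.r.t. Haar measure, and `ω * νsc` is
continuous (atomless) and singular to Haar measure.  Here
`ω * ν = (ω.prod ν).map (+)`. -/
theorem stmt_9 {G : Type*} [TopologicalSpace G] [AddCommGroup G] [IsTopologicalAddGroup G]
    [LocallyCompactSpace G] [T2Space G] [SigmaCompactSpace G] [SecondCountableTopology G]
    [MeasurableSpace G] [BorelSpace G]
    (haar : Measure G) [haar.IsAddHaarMeasure]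
    (ω ν νpp νac νsc : Measure G)
    [IsFiniteMeasure ν] [IsFiniteMeasure νpp] [IsFiniteMeasure νac] [IsFiniteMeasure νsc]
    (hωpp : ∃ D : Set G, D.Countable ∧ ω Dᶜ = 0)
    (hωtb : ∀ C : Set G, IsCompact C → (⨆ t : G, ω ((t + ·) '' C)) < ⊤)
    (hdec : ν = νpp + νac + νsc)
    (hpp : ∃ D : Set G, D.Countable ∧ νpp Dᶜ = 0)
    (hac : νac ≪ haar)
    (hsc : νsc ⟂ₘ haar) (hsc' : ∀ x : G, νsc {x} = 0) :
    (∃ D : Set G, D.Countable ∧ ((ω.prod νpp).map (fun p : G × G => p.1 + p.2)) Dᶜ = 0) ∧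
    ((ω.prod νac).map (fun p : G × G => p.1 + p.2)) ≪ haar ∧
    (∀ x : G, ((ω.prod νsc).map (fun p : G × G => p.1 + p.2)) {x} = 0) ∧
    ((ω.prod νsc).map (fun p : G × G => p.1 + p.2)) ⟂ₘ haar :=
  stmt_9_general haar ω νpp νac νsc hωpp hpp hac hsc hsc'
end
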